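/- Let A = ⟨ℤₙ, {a, b}⟩ be a standardized DFA whose orbit subgroup coincides with the whole group (ℤₙ, ⊕). Then A satisfies Don's conjecture: for every k with 0 < k ≤ n, every subset of ℤₙ with k states is reachable by a word of length at most n(n−k). -/

import Mathlib

/-!
Reading words backwards, it suffices to show that every nonempty proper subset `S` of `ℤₙ`
is the image of a strictly larger set under a word of length at most `n`: the bound
`n (n - k)` then follows by induction on `n - k`.

The letter `a` maps `ℤₙ` onto `ℤₙ \ {0}` and merges `0` and `r` into `d = a 0`. Hence a set
`X ∌ 0` is the image of its preimage, which is strictly larger as soon as `d ∈ X`. So if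
`0 ∉ X` and `aᵗ d ∈ X`, pulling `X` back along `a` at most `t + 1` times gains a state, and
`0` does not appear before the gain.

Since the orbit of `d` generates `ℤₙ`, some `aᵗ d` does not stabilize `S`; take `t` minimal.
Then some `c ∉ S` has `c + aᵗ d ∈ S`, and so does every point of the coset `c + K`, where `K`
is the subgroup generated by `d, …, aᵗ⁻¹ d`. By minimality of `t` these generators are
distinct, and they are nonzero, so `|K| ≥ t + 1` and the coset contains such a `c` with
`c ≤ n - t - 1`. The word `a^{≤ t+1} b^c` then maps a preimage of `S - c` onto `S`.
-/

/-- The action of a word on a state: `true` acts as the letter `a`, `false` acts as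
the letter `b : q ↦ q + 1`. -/
def actAB (n : ℕ) (a : ZMod n → ZMod n) (q : ZMod n) (w : List Bool) : ZMod n :=
  w.foldl (fun p l => if l then a p else p + 1) q

open Finset
open scoped Pointwise

theorem exists_foldl_image_univ_eq {α β : Type*} [Fintype α] [DecidableEq α]
    (f : α → β → α) (L : ℕ)
    (hstep : ∀ S : Finset α, S.Nonempty → S ≠ univ → ∃ T : Finset α, S.card < T.card ∧
      ∃ v : List β, v.length ≤ L ∧ T.image (fun q => v.foldl f q) = S)
    (S : Finset α) (hS : S.Nonempty) :
    ∃ w : List β, w.length ≤ L * (Fintype.card α - S.card) ∧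
      univ.image (fun q => w.foldl f q) = S := by
  induction hk : Fintype.card α - S.card using Nat.strong_induction_on generalizing S with
  | _ k ih =>
  subst hk
  by_cases hSu : S = univ
  · exact ⟨[], by simp, by simp [hSu]⟩
  obtain ⟨T, hST, v, hv, hTS⟩ := hstep S hS hSu
  have hT : T.card ≤ Fintype.card α := card_le_univ T
  obtain ⟨u, hu, huT⟩ := ih _ (by omega) T (card_pos.mp (by omega)) rfl
  refine ⟨u ++ v, ?_, ?_⟩
  · calc (u ++ v).length ≤ L * (Fintype.card α - T.card) + L * 1 := by simp; omega
      _ ≤ L * (Fintype.card α - S.card) := by rw [← mul_add]; gcongr; omega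
  · simp only [List.foldl_append, ← hTS, ← huT, image_image, Function.comp_def]

theorem Function.iterate_injOn_Iio_of_first_exit {α : Type*} (a : α → α) {H : Set α} {x : α}
    {t : ℕ} (hlt : ∀ s < t, a^[s] x ∈ H) (ht : a^[t] x ∉ H) :
    Set.InjOn (fun s => a^[s] x) (Set.Iio t) := by
  intro i hi i' hi' hii'
  by_contra hne
  wlog hlt' : i < i' generalizing i i'
  · exact this hi' hi hii'.symm (Ne.symm hne) (by omega)
  replace hii' : a^[i] x = a^[i'] x := hii'
  have hi't : i' ≤ t := (Set.mem_Iio.mp hi').le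
  have hrep : a^[t] x = a^[t - i' + i] x := by
    rw [Function.iterate_add_apply, hii', ← Function.iterate_add_apply, Nat.sub_add_cancel hi't]
  exact ht (hrep ▸ hlt _ (by omega))

theorem exists_card_lt_image_iterate {α : Type*} [Fintype α] [DecidableEq α] (a : α → α)
    {z r : α} (hsurj : {z}ᶜ ⊆ Set.range a) (hr : r ≠ z) (hra : a r = a z)
    {X : Finset α} (hzX : z ∉ X) {m : ℕ} (hm : a^[m] (a z) ∈ X) :
    ∃ j ≤ m, ∃ T : Finset α, X.card < T.card ∧ T.image a^[j + 1] = X := by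
  have hex : ∃ j, a^[j] (a z) ∈ X := ⟨m, hm⟩
  set j := Nat.find hex
  have hrange : ∀ i ≤ j + 1, (X : Set α) ⊆ Set.range a^[i] := by
    intro i
    induction i with
    | zero => simp
    | succ i ih =>
      intro hi x hx
      obtain ⟨q, rfl⟩ := ih (by omega) hx
      have hqz : q ≠ z := by
        rintro rfl
        cases i with
        | zero => exact hzX hx
        | succ i =>
          exact Nat.find_min hex (by omega : i < j) (by rwa [Function.iterate_succ_apply] at hx)
      obtain ⟨p, rfl⟩ := hsurj hqz
      exact ⟨p, Function.iterate_succ_apply _ _ _⟩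
  set T := univ.filter (fun q => a^[j + 1] q ∈ X)
  have hTX : T.image a^[j + 1] = X := by
    ext y
    simp only [T, mem_image, mem_filter, mem_univ, true_and]
    refine ⟨fun ⟨q, hq, hqy⟩ => hqy ▸ hq, fun hy => ?_⟩
    obtain ⟨q, hq⟩ := hrange _ le_rfl hy
    exact ⟨q, hq ▸ hy, hq⟩
  refine ⟨j, Nat.find_min' hex hm, T, ?_, hTX⟩
  -- equal cardinalities would make `a^[j + 1]` injective on `T`, but it identifies `r` and `z`
  refine hTX ▸ lt_of_le_of_ne card_image_le fun hcard => hr ?_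
  have hzT : z ∈ T :=
    mem_filter.mpr ⟨mem_univ z, by rw [Function.iterate_succ_apply]; exact Nat.find_spec hex⟩
  have hrT : r ∈ T :=
    mem_filter.mpr ⟨mem_univ r, by
      rw [Function.iterate_succ_apply, hra]; exact Nat.find_spec hex⟩
  exact card_image_iff.mp hcard hrT hzT (by simp only [Function.iterate_succ_apply, hra])

theorem Finset.eq_univ_of_stabilizer_eq_top {G : Type*} [AddGroup G] [Fintype G] [DecidableEq G]
    {S : Finset G} (hS : S.Nonempty) (htop : AddAction.stabilizer G S = ⊤) : S = univ := by
  obtain ⟨x, hx⟩ := hS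
  refine eq_univ_of_forall fun y => ?_
  have hstab : (y - x) +ᵥ S = S :=
    AddAction.mem_stabilizer_iff.mp (by rw [htop]; exact AddSubgroup.mem_top _)
  have hmem : (y - x) +ᵥ x ∈ (y - x) +ᵥ S := vadd_mem_vadd_finset hx
  rwa [hstab, vadd_eq_add, sub_add_cancel] at hmem

theorem Finset.exists_notMem_add_mem_of_notMem_stabilizer {G : Type*} [AddGroup G]
    [DecidableEq G] {S : Finset G} {v : G} (hv : v ∉ AddAction.stabilizer G S) :
    ∃ c ∉ S, v + c ∈ S := by
  rw [AddAction.mem_stabilizer_finset_iff_subset_vadd_finset, not_subset] at hv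
  obtain ⟨y, hyS, hy⟩ := hv
  refine ⟨-v + y, fun hc => hy ?_, by simpa using hyS⟩
  simpa using (vadd_mem_vadd_finset hc : v +ᵥ (-v + y) ∈ v +ᵥ S)

theorem AddSubgroup.add_one_le_card_closure_image {G : Type*} [AddGroup G] [Finite G]
    {f : ℕ → G} {t : ℕ} (hf : Set.InjOn f (Set.Iio t)) (hf0 : ∀ s < t, f s ≠ 0) :
    t + 1 ≤ Nat.card (closure (f '' Set.Iio t)) := by
  classical
  have : Fintype G := Fintype.ofFinite G
  have h0 : (0 : G) ∉ (range t).image f := by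
    simp only [mem_image, mem_range, not_exists, not_and]
    exact hf0
  calc t + 1 = #(insert 0 ((range t).image f)) := by
        rw [card_insert_of_notMem h0, card_image_of_injOn (by simpa using hf), card_range]
    _ ≤ #(closure (f '' Set.Iio t) : Set G).toFinset := by
        refine card_le_card (insert_subset (by simp [zero_mem]) fun x hx => ?_)
        obtain ⟨s, hs, rfl⟩ := mem_image.mp hx
        simpa using subset_closure (Set.mem_image_of_mem f (by simpa using hs : s ∈ Set.Iio t))
    _ = Nat.card (closure (f '' Set.Iio t)) := (Nat.card_eq_card_toFinset _).symm

theorem ZMod.exists_mem_val_add_card_le {n : ℕ} [NeZero n] {F : Finset (ZMod n)}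
    (hF : F.Nonempty) : ∃ c ∈ F, c.val + F.card ≤ n := by
  obtain ⟨c, hc, hmin⟩ := F.exists_min_image ZMod.val hF
  refine ⟨c, hc, ?_⟩
  have hsub : F.image ZMod.val ⊆ Ico c.val n := by
    intro m hm
    obtain ⟨x, hx, rfl⟩ := mem_image.mp hm
    exact mem_Ico.mpr ⟨hmin x hx, ZMod.val_lt x⟩
  have hcard := card_le_card hsub
  rw [card_image_of_injective _ (ZMod.val_injective n), Nat.card_Ico] at hcard
  have hc_lt := ZMod.val_lt c
  omega

section actAB
variable {n : ℕ} {a : ZMod n → ZMod n}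

theorem actAB_append (q : ZMod n) (u v : List Bool) :
    actAB n a q (u ++ v) = actAB n a (actAB n a q u) v :=
  List.foldl_append

theorem actAB_replicate_true (m : ℕ) (q : ZMod n) :
    actAB n a q (List.replicate m true) = a^[m] q := by
  induction m generalizing q with
  | zero => rfl
  | succ m ih => exact ih (a q)

theorem actAB_replicate_false (m : ℕ) (q : ZMod n) :
    actAB n a q (List.replicate m false) = q + m := by
  induction m generalizing q with
  | zero => simp [actAB]
  | succ m ih =>
    rw [List.replicate_succ', actAB_append, ih]
    simp [actAB, add_assoc]

variable [NeZero n]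

theorem exists_card_lt_image_actAB_of_notMem_of_add_mem (hexcl : Set.range a = {0}ᶜ)
    {r : ZMod n} (hr : r ≠ 0) (hra : a r = a 0) {S : Finset (ZMod n)} {t : ℕ} {c : ZMod n}
    (hcS : c ∉ S) (hc : a^[t] (a 0) + c ∈ S) :
    ∃ T : Finset (ZMod n), S.card < T.card ∧ ∃ v : List Bool,
      v.length ≤ t + 1 + c.val ∧ T.image (fun q => actAB n a q v) = S := by
  set X := S.image (· - c)
  have h0X : 0 ∉ X := by
    simpa only [X, mem_image, sub_eq_zero, exists_eq_right] using hcS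
  have htX : a^[t] (a 0) ∈ X := mem_image.mpr ⟨_, hc, add_sub_cancel_right _ _⟩
  obtain ⟨j, hjt, T, hXT, hTX⟩ := exists_card_lt_image_iterate a hexcl.superset hr hra h0X htX
  refine ⟨T, (card_image_of_injective _ sub_left_injective).symm.trans_lt hXT,
    List.replicate (j + 1) true ++ List.replicate c.val false, by simp; omega, ?_⟩
  simp only [actAB_append, actAB_replicate_true, actAB_replicate_false, ZMod.natCast_zmod_val]
  rw [show (fun q => a^[j + 1] q + c) = (· + c) ∘ a^[j + 1] from rfl, ← image_image, hTX,
    image_image]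
  simp [Function.comp_def]

theorem exists_card_lt_image_actAB (hexcl : Set.range a = {0}ᶜ) {r : ZMod n} (hr : r ≠ 0)
    (hra : a r = a 0) (hgen : AddSubgroup.closure (Set.range fun s : ℕ => a^[s] (a 0)) = ⊤)
    {S : Finset (ZMod n)} (hS : S.Nonempty) (hSu : S ≠ univ) :
    ∃ T : Finset (ZMod n), S.card < T.card ∧
      ∃ v : List Bool, v.length ≤ n ∧ T.image (fun q => actAB n a q v) = S := by
  classical
  set H := AddAction.stabilizer (ZMod n) S
  have hex : ∃ t, a^[t] (a 0) ∉ H := by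
    by_contra! h
    refine hSu (eq_univ_of_stabilizer_eq_top hS (top_le_iff.mp ?_))
    exact hgen ▸ (AddSubgroup.closure_le H).mpr (Set.range_subset_iff.mpr h)
  set t := Nat.find hex
  have hbefore : ∀ s < t, a^[s] (a 0) ∈ H := fun s hs => not_not.mp (Nat.find_min hex hs)
  set K := AddSubgroup.closure ((a^[·] (a 0)) '' Set.Iio t)
  have hKH : K ≤ H :=
    (AddSubgroup.closure_le H).mpr (by rintro _ ⟨s, hs, rfl⟩; exact hbefore s hs)
  have hKcard : t + 1 ≤ #(K : Set (ZMod n)).toFinset := by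
    rw [← Nat.card_eq_card_toFinset]
    refine AddSubgroup.add_one_le_card_closure_image
      (Function.iterate_injOn_Iio_of_first_exit a hbefore (Nat.find_spec hex)) fun s _ hs => ?_
    rw [← Function.iterate_succ_apply, Function.iterate_succ_apply'] at hs
    exact hexcl.subset ⟨_, hs⟩ rfl
  obtain ⟨c₀, hc₀S, hc₀⟩ := exists_notMem_add_mem_of_notMem_stabilizer (Nat.find_spec hex)
  obtain ⟨c, hcK, hcval⟩ := ZMod.exists_mem_val_add_card_le
    ⟨_, mem_image_of_mem (· + c₀) (Set.mem_toFinset.mpr K.zero_mem)⟩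
  rw [card_image_of_injective _ (add_left_injective c₀)] at hcval
  obtain ⟨k, hk, rfl⟩ := mem_image.mp hcK
  have hkS : k +ᵥ S = S := AddAction.mem_stabilizer_iff.mp (hKH (Set.mem_toFinset.mp hk))
  have hcS : k + c₀ ∉ S := by
    rwa [← hkS, ← vadd_eq_add, vadd_mem_vadd_finset_iff]
  have hc : a^[t] (a 0) + (k + c₀) ∈ S := by
    rw [← hkS, add_left_comm, ← vadd_eq_add, vadd_mem_vadd_finset_iff]
    exact hc₀
  obtain ⟨T, hST, v, hv, hTS⟩ :=
    exists_card_lt_image_actAB_of_notMem_of_add_mem hexcl hr hra hcS hc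
  exact ⟨T, hST, v, by omega, hTS⟩

end actAB

theorem stmt8_general (n : ℕ) [NeZero n] (a : ZMod n → ZMod n)
    (hexcl : Set.range a = {(0 : ZMod n)}ᶜ)
    (r : ZMod n) (hr : r ≠ 0) (hra : a r = a 0)
    (ℓ : ℕ)
    -- the orbit subgroup is the whole group
    (horb : AddSubgroup.closure {x : ZMod n | ∃ s : ℕ, s < ℓ ∧ x = a^[s] (a 0)} = ⊤) :
    ∀ S : Finset (ZMod n), S.Nonempty →
      ∃ w : List Bool, w.length ≤ n * (n - S.card) ∧
        Finset.univ.image (fun q => actAB n a q w) = S := by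
  have hgen : AddSubgroup.closure (Set.range fun s : ℕ => a^[s] (a 0)) = ⊤ :=
    top_le_iff.mp <| horb ▸
      AddSubgroup.closure_mono (by rintro _ ⟨s, -, rfl⟩; exact ⟨s, rfl⟩)
  intro S hS
  obtain ⟨w, hw, hwS⟩ := exists_foldl_image_univ_eq _ n
    (fun S hS hSu => exists_card_lt_image_actAB hexcl hr hra hgen hS hSu) S hS
  exact ⟨w, by rwa [ZMod.card] at hw, hwS⟩

/-- Theorem 1: every standardized DFA `⟨ℤₙ, {a, b}⟩` whose orbit subgroup coincides
with the whole group `(ℤₙ, ⊕)` fulfills Don's conjecture: every subset with `k > 0`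
states is reachable by a word of length at most `n(n - k)`. -/
theorem stmt8 (n : ℕ) [NeZero n] (hn : 2 ≤ n) (a : ZMod n → ZMod n)
    (hexcl : Set.range a = {(0 : ZMod n)}ᶜ)
    (hdupl : ∀ p : ZMod n,
      (∃ q₁ q₂ : ZMod n, q₁ ≠ q₂ ∧ a q₁ = p ∧ a q₂ = p) ↔ p = a 0)
    (r : ZMod n) (hr : r ≠ 0) (hra : a r = a 0)
    (ℓ : ℕ) (hℓ1 : 1 ≤ ℓ) (hℓr : a^[ℓ - 1] (a 0) = r)
    (hℓmin : ∀ m : ℕ, 1 ≤ m → a^[m - 1] (a 0) = r → ℓ ≤ m)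
    -- the orbit subgroup is the whole group
    (horb : AddSubgroup.closure {x : ZMod n | ∃ s : ℕ, s < ℓ ∧ x = a^[s] (a 0)} = ⊤) :
    ∀ S : Finset (ZMod n), S.Nonempty →
      ∃ w : List Bool, w.length ≤ n * (n - S.card) ∧
        Finset.univ.image (fun q => actAB n a q w) = S :=
  stmt8_general n a hexcl r hr hra ℓ horb
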